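/- Soundness of the FrameOk rule: if the ISL triple [ψ] C [ok: φ] is valid and mod(C) ∩ fv(R) = ∅, then [ψ * R] C [ok: φ * R] is valid, where validity of [P] C [ε: Q] means every state satisfying Q is reachable via ⟦C⟧_ε from some state satisfying P. -/
import Mathlib


/-- Variables -/
abbrev Var := String
/-- Locations -/
abbrev Loc := ℕ
/-- Values -/
abbrev Val := ℕ

/-- Terms: variables, the constant null, and numeric constants. -/
inductive Term where
  | var (x : Var)
  | null
  | const (n : ℕ)
deriving DecidableEq

/-- Stores: total functions from variables to values. -/
abbrev Store := Var → Val

/-- Heaps: partial functions from locations to values or ⊥.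
`none` = not in domain, `some none` = ⊥ (deallocated), `some (some v)` = value `v`. -/
abbrev Heap := Loc → Option (Option Val)

def Term.eval (s : Store) : Term → Val
  | .var x => s x
  | .null => 0
  | .const n => n

def Store.upd (s : Store) (x : Var) (v : Val) : Store :=
  fun y => if y = x then v else s y

def Heap.emptyH : Heap := fun _ => none

def Heap.dom (h : Heap) : Set Loc := {l | h l ≠ none}

def Heap.domPos (h : Heap) : Set Loc := {l | ∃ v : Val, h l = some (some v)}

def Heap.disj (h₁ h₂ : Heap) : Prop := Heap.dom h₁ ∩ Heap.dom h₂ = ∅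

def Heap.comp (h₁ h₂ : Heap) : Heap :=
  fun l => match h₁ l with
    | some v => some v
    | none => h₂ l

def Heap.upd (h : Heap) (l : Loc) (v : Option Val) : Heap :=
  fun l' => if l' = l then some v else h l'

def Heap.single (l : Loc) (v : Option Val) : Heap :=
  fun l' => if l' = l then some v else none

/-- Atomic formulas of quantifier-free symbolic heaps. -/
inductive Atom where
  | emp
  | pt (t u : Term)      -- t ↦ u
  | npt (t : Term)       -- t ↛  (negative heap assertion)
  | eq (t u : Term)      -- t ≈ u
  | neq (t u : Term)     -- t ≉ u
deriving DecidableEq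

/-- Quantifier-free symbolic heap: a ∗-conjunction of atoms. -/
abbrev SymHeap := List Atom

def Atom.sat (s : Store) (h : Heap) : Atom → Prop
  | .emp => h = Heap.emptyH
  | .pt t u => h = Heap.single (t.eval s) (some (u.eval s))
  | .npt t => h = Heap.single (t.eval s) none
  | .eq t u => t.eval s = u.eval s ∧ h = Heap.emptyH
  | .neq t u => t.eval s ≠ u.eval s ∧ h = Heap.emptyH

def SymHeap.sat (s : Store) (h : Heap) : SymHeap → Prop
  | [] => h = Heap.emptyH
  | a :: ψ => ∃ h₁ h₂, Heap.disj h₁ h₂ ∧ h = Heap.comp h₁ h₂ ∧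
      Atom.sat s h₁ a ∧ SymHeap.sat s h₂ ψ

def Term.subst (t : Term) (x : Var) (r : Term) : Term :=
  match t with
  | .var y => if y = x then r else .var y
  | t => t

def Atom.subst (a : Atom) (x : Var) (r : Term) : Atom :=
  match a with
  | .emp => .emp
  | .pt t u => .pt (t.subst x r) (u.subst x r)
  | .npt t => .npt (t.subst x r)
  | .eq t u => .eq (t.subst x r) (u.subst x r)
  | .neq t u => .neq (t.subst x r) (u.subst x r)

def SymHeap.subst (ψ : SymHeap) (x : Var) (r : Term) : SymHeap :=
  ψ.map (Atom.subst · x r)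

def Term.fv : Term → Set Var
  | .var x => {x}
  | _ => ∅

def Atom.fv : Atom → Set Var
  | .emp => ∅
  | .pt t u => t.fv ∪ u.fv
  | .npt t => t.fv
  | .eq t u => t.fv ∪ u.fv
  | .neq t u => t.fv ∪ u.fv

def SymHeap.fv (ψ : SymHeap) : Set Var := ⋃ a ∈ ψ, Atom.fv a

/-- Commands of the ISL programming language. -/
inductive Com where
  | skip
  | assign (x : Var) (t : Term)       -- x := t
  | havoc (x : Var)                   -- x := *
  | assm (B : SymHeap)                -- assume(B), B a pure formula
  | localv (x : Var) (C : Com)        -- local x in C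
  | seq (C₁ C₂ : Com)
  | choice (C₁ C₂ : Com)
  | star (C : Com)
  | alloc (x : Var)                   -- x := alloc()
  | free (x : Var)
  | load (x y : Var)                  -- x := [y]
  | store (x : Var) (t : Term)        -- [x] := t
  | error

/-- Exit conditions. -/
inductive ExitCond where
  | ok
  | er
deriving DecidableEq

abbrev State := Store × Heap
abbrev ISLRel := State → State → Prop

def relComp (R₁ R₂ : ISLRel) : ISLRel := fun a c => ∃ b, R₁ a b ∧ R₂ b c

def relIter (R : ISLRel) : ℕ → ISLRel
  | 0 => fun a b => a = b
  | n + 1 => relComp R (relIter R n)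

/-- `s ⊨ B` for a pure formula `B`: satisfaction in the empty heap. -/
def pureSat (s : Store) (B : SymHeap) : Prop := SymHeap.sat s Heap.emptyH B

/-- A pure formula: a ∗-conjunction of (in)equalities. -/
def isPure (B : SymHeap) : Prop :=
  ∀ a ∈ B, ∃ t u, a = Atom.eq t u ∨ a = Atom.neq t u

/-- Denotational semantics ⟦C⟧_ε of ISL commands. -/
def sem : Com → ExitCond → ISLRel
  | .skip, .ok => fun σ σ' => σ' = σ
  | .skip, .er => fun _ _ => False
  | .assign x t, .ok => fun σ σ' => σ' = (Store.upd σ.1 x (Term.eval σ.1 t), σ.2)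
  | .assign _ _, .er => fun _ _ => False
  | .havoc x, .ok => fun σ σ' => ∃ v : Val, σ' = (Store.upd σ.1 x v, σ.2)
  | .havoc _, .er => fun _ _ => False
  | .assm B, .ok => fun σ σ' => σ' = σ ∧ pureSat σ.1 B
  | .assm _, .er => fun _ _ => False
  | .localv x C, ε => fun σ σ' =>
      ∃ v v' : Val, sem C ε (Store.upd σ.1 x v, σ.2) (Store.upd σ'.1 x v', σ'.2) ∧
        σ.1 x = σ'.1 x
  | .seq C₁ C₂, .ok => relComp (sem C₁ .ok) (sem C₂ .ok)
  | .seq C₁ C₂, .er => fun σ σ' =>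
      sem C₁ .er σ σ' ∨ relComp (sem C₁ .ok) (sem C₂ .er) σ σ'
  | .choice C₁ C₂, ε => fun σ σ' => sem C₁ ε σ σ' ∨ sem C₂ ε σ σ'
  | .star C, .ok => fun σ σ' => ∃ n, relIter (sem C .ok) n σ σ'
  | .star C, .er => fun σ σ' => ∃ n, relComp (relIter (sem C .ok) n) (sem C .er) σ σ'
  | .alloc x, .ok => fun σ σ' =>
      ∃ (l : Loc) (v : Val), (σ.2 l = none ∨ σ.2 l = some none) ∧
        σ' = (Store.upd σ.1 x l, Heap.upd σ.2 l (some v))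
  | .alloc _, .er => fun _ _ => False
  | .free x, .ok => fun σ σ' =>
      σ.1 x ∈ Heap.domPos σ.2 ∧ σ' = (σ.1, Heap.upd σ.2 (σ.1 x) none)
  | .free x, .er => fun σ σ' => σ.1 x ∉ Heap.domPos σ.2 ∧ σ' = σ
  | .load x y, .ok => fun σ σ' =>
      ∃ v : Val, σ.2 (σ.1 y) = some (some v) ∧ σ' = (Store.upd σ.1 x v, σ.2)
  | .load _ y, .er => fun σ σ' => σ.1 y ∉ Heap.domPos σ.2 ∧ σ' = σ
  | .store x t, .ok => fun σ σ' =>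
      σ.1 x ∈ Heap.domPos σ.2 ∧ σ' = (σ.1, Heap.upd σ.2 (σ.1 x) (some (Term.eval σ.1 t)))
  | .store x _, .er => fun σ σ' => σ.1 x ∉ Heap.domPos σ.2 ∧ σ' = σ
  | .error, .ok => fun _ _ => False
  | .error, .er => fun σ σ' => σ' = σ

/-- Free variables of a command. -/
def Com.fv : Com → Set Var
  | .skip => ∅
  | .assign x t => {x} ∪ Term.fv t
  | .havoc x => {x}
  | .assm B => SymHeap.fv B
  | .localv x C => Com.fv C \ {x}
  | .seq C₁ C₂ => Com.fv C₁ ∪ Com.fv C₂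
  | .choice C₁ C₂ => Com.fv C₁ ∪ Com.fv C₂
  | .star C => Com.fv C
  | .alloc x => {x}
  | .free x => {x}
  | .load x y => {x} ∪ {y}
  | .store x t => {x} ∪ Term.fv t
  | .error => ∅

/-- Variables modified by a command. -/
def Com.mod : Com → Set Var
  | .skip => ∅
  | .assign x _ => {x}
  | .havoc x => {x}
  | .assm _ => ∅
  | .localv x C => Com.mod C \ {x}
  | .seq C₁ C₂ => Com.mod C₁ ∪ Com.mod C₂
  | .choice C₁ C₂ => Com.mod C₁ ∪ Com.mod C₂
  | .star C => Com.mod C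
  | .alloc x => {x}
  | .free _ => ∅
  | .load x _ => {x}
  | .store _ _ => ∅
  | .error => ∅

/-- Semantic weakest postcondition. -/
def WPO (P : State → Prop) (C : Com) (ε : ExitCond) : Set State :=
  {σ' | ∃ σ, P σ ∧ sem C ε σ σ'}

/-- Satisfaction of a symbolic heap as a predicate on states. -/
def satSH (ψ : SymHeap) : State → Prop := fun σ => SymHeap.sat σ.1 σ.2 ψ

/-- Satisfaction of an existentially quantified symbolic heap `∃ x⃗. ψ`. -/
def satEx (s : Store) (h : Heap) : List Var → SymHeap → Prop
  | [], ψ => SymHeap.sat s h ψ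
  | x :: xs, ψ => ∃ v : Val, satEx (Store.upd s x v) h xs ψ

/-- Terms over a set of variables, together with null. -/
def termsOf (V : Set Var) : Set Term := {Term.null} ∪ (Term.var '' V)

/-- Canonical forms: symbolic heaps containing `t ≈ u` or `t ≉ u`
for every pair of terms over `V ∪ {null}`. -/
def CFsh (V : Set Var) : Set SymHeap :=
  {ψ | ∀ t ∈ termsOf V, ∀ u ∈ termsOf V, Atom.eq t u ∈ ψ ∨ Atom.neq t u ∈ ψ}

/-- Complete case analyses `Π(V)`: pure formulas deciding every pair of terms
over `V ∪ {null}`, with the equality part reflexive and symmetric. -/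
def PiCA (V : Set Var) : Set SymHeap :=
  {π | (∀ a ∈ π, ∃ t ∈ termsOf V, ∃ u ∈ termsOf V, a = Atom.eq t u ∨ a = Atom.neq t u)
    ∧ (∀ t ∈ termsOf V, ∀ u ∈ termsOf V,
        (Atom.eq t u ∈ π ∧ Atom.neq t u ∉ π) ∨ (Atom.neq t u ∈ π ∧ Atom.eq t u ∉ π))
    ∧ (∀ t ∈ termsOf V, Atom.eq t t ∈ π)
    ∧ (∀ t u, Atom.eq t u ∈ π → Atom.eq u t ∈ π)}

def SymHeap.satisfiable (ψ : SymHeap) : Prop := ∃ s h, SymHeap.sat s h ψ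

/-- Case analysis `CA(ψ, C)`. -/
def CA (ψ : SymHeap) (C : Com) : Set SymHeap :=
  {φ | ∃ π ∈ PiCA (SymHeap.fv ψ ∪ Com.fv C), φ = π ++ ψ ∧ SymHeap.satisfiable φ}

/-- Validity of ISL triples: `⊨ [P] C [ε : Q]`. -/
def validTriple (P : State → Prop) (C : Com) (ε : ExitCond) (Q : State → Prop) : Prop :=
  ∀ σ', Q σ' → ∃ σ, P σ ∧ sem C ε σ σ'

namespace FrameAux

/-- Pointwise heap disjointness. -/
def HD (h₁ h₂ : Heap) : Prop := ∀ l, h₁ l = none ∨ h₂ l = none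

lemma disj_iff (h₁ h₂ : Heap) : Heap.disj h₁ h₂ ↔ HD h₁ h₂ := by
  constructor
  · intro hd l
    by_contra hc
    push_neg at hc
    have hmem : l ∈ Heap.dom h₁ ∩ Heap.dom h₂ := ⟨hc.1, hc.2⟩
    rw [Heap.disj] at hd
    rw [hd] at hmem
    exact hmem
  · intro hd
    rw [Heap.disj]
    ext l
    simp only [Set.mem_inter_iff, Set.mem_empty_iff_false, iff_false, not_and]
    intro h1 h2
    rcases hd l with h | h
    · exact h1 h
    · exact h2 h

lemma comp_empty_left (h : Heap) : Heap.comp Heap.emptyH h = h := by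
  funext l; rfl

lemma comp_none_iff (h₁ h₂ : Heap) (l : Loc) :
    Heap.comp h₁ h₂ l = none ↔ h₁ l = none ∧ h₂ l = none := by
  unfold Heap.comp
  cases h₁ l <;> simp

lemma comp_assoc (h₁ h₂ h₃ : Heap) :
    Heap.comp (Heap.comp h₁ h₂) h₃ = Heap.comp h₁ (Heap.comp h₂ h₃) := by
  funext l
  unfold Heap.comp
  cases h₁ l <;> simp

lemma upd_comp (h h₂ : Heap) (l : Loc) (v : Option Val) :
    Heap.comp (Heap.upd h l v) h₂ = Heap.upd (Heap.comp h h₂) l v := by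
  funext l'
  unfold Heap.comp Heap.upd
  by_cases hl : l' = l <;> simp [hl]

lemma comp_left_none {h₁ : Heap} {l : Loc} (h₂ : Heap) (hc : h₁ l = none) :
    Heap.comp h₁ h₂ l = h₂ l := by
  unfold Heap.comp; rw [hc]

lemma comp_left_some {h₁ : Heap} {l : Loc} {v : Option Val} (h₂ : Heap)
    (hc : h₁ l = some v) : Heap.comp h₁ h₂ l = some v := by
  unfold Heap.comp; rw [hc]

lemma sat_append (s : Store) (ψ R : SymHeap) :
    ∀ h, SymHeap.sat s h (ψ ++ R) ↔
      ∃ h₁ h₂, Heap.disj h₁ h₂ ∧ h = Heap.comp h₁ h₂ ∧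
        SymHeap.sat s h₁ ψ ∧ SymHeap.sat s h₂ R := by
  induction ψ with
  | nil =>
    intro h
    constructor
    · intro hs
      refine ⟨Heap.emptyH, h, ?_, (comp_empty_left h).symm, rfl, hs⟩
      rw [disj_iff]; intro l; left; rfl
    · rintro ⟨h₁, h₂, hd, rfl, h1e, h2s⟩
      simp only [SymHeap.sat] at h1e
      subst h1e
      rw [comp_empty_left]
      exact h2s
  | cons a ψ ih =>
    intro h
    constructor
    · rintro ⟨ha, hrest, hd, rfl, hsa, hsrest⟩
      obtain ⟨h₁, h₂, hd12, rfl, hs1, hs2⟩ := (ih hrest).mp hsrest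
      rw [disj_iff] at hd hd12
      refine ⟨Heap.comp ha h₁, h₂, ?_, (comp_assoc _ _ _).symm, ?_, hs2⟩
      · rw [disj_iff]
        intro l
        rcases hd12 l with h1n | h2n
        · rcases hd l with han | hcn
          · left; rw [comp_none_iff]; exact ⟨han, h1n⟩
          · right; exact ((comp_none_iff _ _ _).mp hcn).2
        · right; exact h2n
      · refine ⟨ha, h₁, ?_, rfl, hsa, hs1⟩
        rw [disj_iff]
        intro l
        rcases hd l with han | hcn
        · left; exact han
        · right; exact ((comp_none_iff _ _ _).mp hcn).1
    · rintro ⟨h₁, h₂, hd, rfl, ⟨ha, h₁', hd1, rfl, hsa, hs1⟩, hs2⟩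
      rw [disj_iff] at hd hd1
      refine ⟨ha, Heap.comp h₁' h₂, ?_, comp_assoc _ _ _, hsa, ?_⟩
      · rw [disj_iff]
        intro l
        rcases hd1 l with han | h1n
        · left; exact han
        · rcases hd l with hcn | h2n
          · left; exact ((comp_none_iff _ _ _).mp hcn).1
          · right; rw [comp_none_iff]; exact ⟨h1n, h2n⟩
      · refine (ih _).mpr ⟨h₁', h₂, ?_, rfl, hs1, hs2⟩
        rw [disj_iff]
        intro l
        rcases hd l with hcn | h2n
        · left; exact ((comp_none_iff _ _ _).mp hcn).2
        · right; exact h2n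

lemma term_eval_agree {s s' : Store} {t : Term}
    (h : ∀ x ∈ Term.fv t, s x = s' x) : Term.eval s t = Term.eval s' t := by
  cases t with
  | var x => exact h x (by simp [Term.fv])
  | null => rfl
  | const n => rfl

lemma atom_sat_agree {s s' : Store} {a : Atom} (hag : ∀ x ∈ Atom.fv a, s x = s' x) :
    ∀ h, Atom.sat s h a ↔ Atom.sat s' h a := by
  intro h
  cases a with
  | emp => rfl
  | pt t u =>
    have ht := term_eval_agree (t := t) (fun x hx => hag x (Or.inl hx))
    have hu := term_eval_agree (t := u) (fun x hx => hag x (Or.inr hx))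
    simp [Atom.sat, ht, hu]
  | npt t =>
    have ht := term_eval_agree (t := t) (fun x hx => hag x hx)
    simp [Atom.sat, ht]
  | eq t u =>
    have ht := term_eval_agree (t := t) (fun x hx => hag x (Or.inl hx))
    have hu := term_eval_agree (t := u) (fun x hx => hag x (Or.inr hx))
    simp [Atom.sat, ht, hu]
  | neq t u =>
    have ht := term_eval_agree (t := t) (fun x hx => hag x (Or.inl hx))
    have hu := term_eval_agree (t := u) (fun x hx => hag x (Or.inr hx))
    simp [Atom.sat, ht, hu]

lemma symheap_sat_agree {s s' : Store} {ψ : SymHeap}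
    (hag : ∀ x ∈ SymHeap.fv ψ, s x = s' x) :
    ∀ h, SymHeap.sat s h ψ ↔ SymHeap.sat s' h ψ := by
  induction ψ with
  | nil => intro h; rfl
  | cons a ψ ih =>
    intro h
    have haga : ∀ x ∈ Atom.fv a, s x = s' x := fun x hx =>
      hag x (by simp [SymHeap.fv]; exact Or.inl hx)
    have hagr : ∀ x ∈ SymHeap.fv ψ, s x = s' x := fun x hx => by
      refine hag x ?_
      simp [SymHeap.fv] at hx ⊢
      obtain ⟨b, hb, hxb⟩ := hx
      exact Or.inr ⟨b, hb, hxb⟩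
    simp only [SymHeap.sat]
    constructor
    · rintro ⟨h₁, h₂, hd, rfl, hsa, hss⟩
      exact ⟨h₁, h₂, hd, rfl, (atom_sat_agree haga h₁).mp hsa, (ih hagr h₂).mp hss⟩
    · rintro ⟨h₁, h₂, hd, rfl, hsa, hss⟩
      exact ⟨h₁, h₂, hd, rfl, (atom_sat_agree haga h₁).mpr hsa, (ih hagr h₂).mpr hss⟩

lemma sem_ok_mono : ∀ (C : Com) (σ σ' : State), sem C .ok σ σ' →
    ∀ l, σ.2 l ≠ none → σ'.2 l ≠ none := by
  intro C
  induction C with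
  | skip => rintro σ σ' rfl l h; exact h
  | assign x t => rintro σ σ' rfl l h; exact h
  | havoc x => rintro σ σ' ⟨v, rfl⟩ l h; exact h
  | assm B => rintro σ σ' ⟨rfl, _⟩ l h; exact h
  | localv x C ih =>
    rintro σ σ' ⟨v, v', hs, _⟩ l h
    exact ih _ _ hs l h
  | seq C₁ C₂ ih₁ ih₂ =>
    rintro σ σ' ⟨σm, h1, h2⟩ l h
    exact ih₂ _ _ h2 l (ih₁ _ _ h1 l h)
  | choice C₁ C₂ ih₁ ih₂ =>
    rintro σ σ' (h | h) l hl
    · exact ih₁ _ _ h l hl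
    · exact ih₂ _ _ h l hl
  | star C ih =>
    rintro σ σ' ⟨n, hiter⟩
    induction n generalizing σ with
    | zero => rw [show σ = σ' from hiter]; exact fun l h => h
    | succ n ihn =>
      obtain ⟨b, h1, h2⟩ := hiter
      exact fun l hl => ihn b h2 l (ih _ _ h1 l hl)
  | alloc x =>
    rintro σ σ' ⟨l₀, v, hc, rfl⟩ l h
    simp only [Heap.upd]
    by_cases hl : l = l₀ <;> simp [hl]
    exact h
  | free x =>
    rintro σ σ' ⟨hm, rfl⟩ l h
    simp only [Heap.upd]
    by_cases hl : l = σ.1 x <;> simp [hl]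
    exact h
  | load x y =>
    rintro σ σ' ⟨v, hv, rfl⟩ l h; exact h
  | store x t =>
    rintro σ σ' ⟨hm, rfl⟩ l h
    simp only [Heap.upd]
    by_cases hl : l = σ.1 x <;> simp [hl]
    exact h
  | error => rintro σ σ' ⟨⟩

lemma sem_ok_agree : ∀ (C : Com) (σ σ' : State), sem C .ok σ σ' →
    ∀ x, x ∉ Com.mod C → σ.1 x = σ'.1 x := by
  intro C
  induction C with
  | skip => rintro σ σ' rfl x hx; rfl
  | assign y t =>
    rintro σ σ' rfl x hx
    simp only [Com.mod, Set.mem_singleton_iff] at hx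
    simp [Store.upd, hx]
  | havoc y =>
    rintro σ σ' ⟨v, rfl⟩ x hx
    simp only [Com.mod, Set.mem_singleton_iff] at hx
    simp [Store.upd, hx]
  | assm B => rintro σ σ' ⟨rfl, _⟩ x hx; rfl
  | localv y C ih =>
    rintro σ σ' ⟨v, v', hs, hxy⟩ x hx
    simp only [Com.mod, Set.mem_diff, Set.mem_singleton_iff] at hx
    push_neg at hx
    by_cases hxy' : x = y
    · subst hxy'; exact hxy
    · have := ih _ _ hs x (fun hm => hxy' (hx hm))
      simpa [Store.upd, hxy'] using this
  | seq C₁ C₂ ih₁ ih₂ =>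
    rintro σ σ' ⟨σm, h1, h2⟩ x hx
    simp only [Com.mod, Set.mem_union] at hx
    push_neg at hx
    rw [ih₁ _ _ h1 x hx.1, ih₂ _ _ h2 x hx.2]
  | choice C₁ C₂ ih₁ ih₂ =>
    rintro σ σ' (h | h) x hx <;>
      simp only [Com.mod, Set.mem_union] at hx <;> push_neg at hx
    · exact ih₁ _ _ h x hx.1
    · exact ih₂ _ _ h x hx.2
  | star C ih =>
    rintro σ σ' ⟨n, hiter⟩ x hx
    induction n generalizing σ with
    | zero => rw [show σ = σ' from hiter]
    | succ n ihn =>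
      obtain ⟨b, h1, h2⟩ := hiter
      rw [ih _ _ h1 x hx, ihn b h2]
  | alloc y =>
    rintro σ σ' ⟨l, v, hc, rfl⟩ x hx
    simp only [Com.mod, Set.mem_singleton_iff] at hx
    simp [Store.upd, hx]
  | free y => rintro σ σ' ⟨hm, rfl⟩ x hx; rfl
  | load y z =>
    rintro σ σ' ⟨v, hv, rfl⟩ x hx
    simp only [Com.mod, Set.mem_singleton_iff] at hx
    simp [Store.upd, hx]
  | store y t => rintro σ σ' ⟨hm, rfl⟩ x hx; rfl
  | error => rintro σ σ' ⟨⟩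

lemma sem_ok_frame : ∀ (C : Com) (σ σ' : State) (hR : Heap), sem C .ok σ σ' →
    (∀ l, σ'.2 l ≠ none → hR l = none) →
    sem C .ok (σ.1, Heap.comp σ.2 hR) (σ'.1, Heap.comp σ'.2 hR) := by
  intro C
  induction C with
  | skip => rintro σ σ' hR rfl hd; rfl
  | assign y t => rintro σ σ' hR rfl hd; rfl
  | havoc y => rintro σ σ' hR ⟨v, rfl⟩ hd; exact ⟨v, rfl⟩
  | assm B => rintro σ σ' hR ⟨rfl, hp⟩ hd; exact ⟨rfl, hp⟩
  | localv y C ih =>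
    rintro σ σ' hR ⟨v, v', hs, hxy⟩ hd
    exact ⟨v, v', ih (Store.upd σ.1 y v, σ.2) (Store.upd σ'.1 y v', σ'.2) hR hs hd, hxy⟩
  | seq C₁ C₂ ih₁ ih₂ =>
    rintro σ σ' hR ⟨σm, h1, h2⟩ hd
    have hdm : ∀ l, σm.2 l ≠ none → hR l = none := fun l hl =>
      hd l (sem_ok_mono C₂ _ _ h2 l hl)
    exact ⟨(σm.1, Heap.comp σm.2 hR), ih₁ _ _ hR h1 hdm, ih₂ _ _ hR h2 hd⟩
  | choice C₁ C₂ ih₁ ih₂ =>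
    rintro σ σ' hR (h | h) hd
    · exact Or.inl (ih₁ _ _ hR h hd)
    · exact Or.inr (ih₂ _ _ hR h hd)
  | star C ih =>
    rintro σ σ' hR ⟨n, hiter⟩ hd
    refine ⟨n, ?_⟩
    induction n generalizing σ with
    | zero => rw [show σ = σ' from hiter]; rfl
    | succ n ihn =>
      obtain ⟨b, h1, h2⟩ := hiter
      have hdb : ∀ l, b.2 l ≠ none → hR l = none := fun l hl =>
        hd l (sem_ok_mono (Com.star C) b σ' ⟨n, h2⟩ l hl)
      exact ⟨(b.1, Heap.comp b.2 hR), ih _ _ hR h1 hdb, ihn b h2⟩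
  | alloc y =>
    rintro σ σ' hR ⟨l, v, hc, rfl⟩ hd
    refine ⟨l, v, ?_, ?_⟩
    · have hRl : hR l = none := hd l (by simp [Heap.upd])
      dsimp only
      rcases hc with hc | hc
      · left; rw [comp_left_none hR hc, hRl]
      · right; exact comp_left_some hR hc
    · exact congrArg (Prod.mk _) (upd_comp _ _ _ _)
  | free y =>
    rintro σ σ' hR ⟨⟨v, hv⟩, rfl⟩ hd
    exact ⟨⟨v, comp_left_some hR hv⟩, congrArg (Prod.mk _) (upd_comp _ _ _ _)⟩
  | load y z =>
    rintro σ σ' hR ⟨v, hv, rfl⟩ hd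
    exact ⟨v, comp_left_some hR hv, rfl⟩
  | store y t =>
    rintro σ σ' hR ⟨⟨v, hv⟩, rfl⟩ hd
    exact ⟨⟨v, comp_left_some hR hv⟩, congrArg (Prod.mk _) (upd_comp _ _ _ _)⟩
  | error => rintro σ σ' hR ⟨⟩

end FrameAux

/-- soundness of the FrameOk rule. -/
theorem frameOk_sound (ψ φ R : SymHeap) (C : Com)
    (hvalid : validTriple (satSH ψ) C .ok (satSH φ))
    (hmod : Com.mod C ∩ SymHeap.fv R = ∅) :
    validTriple (satSH (ψ ++ R)) C .ok (satSH (φ ++ R)) := by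
  intro σ' hσ'
  obtain ⟨h₁, hRh, hd, heq2, hφ, hRsat⟩ :=
    (FrameAux.sat_append σ'.1 φ R σ'.2).mp hσ'
  obtain ⟨σ₀, hψ, hsem⟩ := hvalid (σ'.1, h₁) hφ
  rw [FrameAux.disj_iff] at hd
  have hd' : ∀ l, h₁ l ≠ none → hRh l = none := fun l hl =>
    (hd l).resolve_left hl
  have hsemF := FrameAux.sem_ok_frame C σ₀ (σ'.1, h₁) hRh hsem hd'
  have hd0 : FrameAux.HD σ₀.2 hRh := by
    intro l
    by_cases h0 : σ₀.2 l = none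
    · exact Or.inl h0
    · exact Or.inr (hd' l (FrameAux.sem_ok_mono C σ₀ (σ'.1, h₁) hsem l h0))
  have hag : ∀ x ∈ SymHeap.fv R, σ₀.1 x = σ'.1 x := by
    intro x hx
    have hxm : x ∉ Com.mod C := by
      intro hm
      have : x ∈ Com.mod C ∩ SymHeap.fv R := ⟨hm, hx⟩
      rw [hmod] at this
      exact this
    exact FrameAux.sem_ok_agree C σ₀ (σ'.1, h₁) hsem x hxm
  have hRsat0 : SymHeap.sat σ₀.1 hRh R :=
    (FrameAux.symheap_sat_agree hag hRh).mpr hRsat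
  refine ⟨(σ₀.1, Heap.comp σ₀.2 hRh), ?_, ?_⟩
  · exact (FrameAux.sat_append σ₀.1 ψ R _).mpr
      ⟨σ₀.2, hRh, (FrameAux.disj_iff _ _).mpr hd0, rfl, hψ, hRsat0⟩
  · have : σ' = (σ'.1, Heap.comp h₁ hRh) := by
      rw [← heq2]
    rw [this]
    exact hsemF
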